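/- Define w₂(v,m) = √((m² + v²)³) + v³ − 3vm² on the set {(v,m) : v ∈ ℝ, m > 0}. Then w₂ is differentiable there and satisfies the first-order PDE (−v + √(m² + v²)) ∂_v w₂(v,m) + m ∂_m w₂(v,m) = 0 for all v ∈ ℝ, m > 0; equivalently, ∇w₂(v,m) is orthogonal to r₁(v,m) = (−v + √(v²+m²), m), so w₂ is a Riemann invariant of the system of conservation laws with flux F(v,m) = (v²/2 − m²/2, −vm). -/

import Mathlib

/-!
Writing `r = √(m² + v²)`, one has `w₂ = r³ + v³ − 3vm²`, whose partial derivatives are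
`∂ᵥw₂ = 3vr + 3v² − 3m²` and `∂ₘw₂ = 3mr − 6vm`. Pairing them with `(r − v, m)` leaves
`3v (r² − v² − m²)`, which vanishes.
-/

open Real

theorem HasDerivAt.sqrt_pow_three {f : ℝ → ℝ} {f' x : ℝ} (hf : HasDerivAt f f' x)
    (hx : 0 < f x) : HasDerivAt (fun y => √(f y ^ 3)) (3 / 2 * √(f x) * f') x := by
  convert (hf.fun_pow 3).sqrt (pow_pos hx 3).ne' using 1
  have hcube : √(f x ^ 3) = f x * √(f x) := by
    rw [pow_succ, sqrt_mul (sq_nonneg _), sqrt_sq hx.le]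
  have hroot : √(f x) ≠ 0 := (sqrt_pos.mpr hx).ne'
  rw [hcube]
  field_simp
  rw [sq_sqrt hx.le]
  ring

noncomputable def w₂ (v m : ℝ) : ℝ := √((m ^ 2 + v ^ 2) ^ 3) + v ^ 3 - 3 * v * m ^ 2

section

variable {v m : ℝ}

theorem hasDerivAt_w₂_fst (hs : 0 < m ^ 2 + v ^ 2) :
    HasDerivAt (fun x => w₂ x m) (3 * v * √(m ^ 2 + v ^ 2) + 3 * v ^ 2 - 3 * m ^ 2) v := by
  have hsum : HasDerivAt (fun x => m ^ 2 + x ^ 2) (2 * v) v := by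
    simpa using (hasDerivAt_pow 2 v).const_add (m ^ 2)
  have hlin : HasDerivAt (fun x => 3 * x * m ^ 2) (3 * m ^ 2) v := by
    simpa using ((hasDerivAt_id v).const_mul 3).mul_const (m ^ 2)
  exact (((hsum.sqrt_pow_three hs).fun_add (hasDerivAt_pow 3 v)).fun_sub hlin).congr_deriv
    (by ring)

theorem hasDerivAt_w₂_snd (hs : 0 < m ^ 2 + v ^ 2) :
    HasDerivAt (fun y => w₂ v y) (3 * m * √(m ^ 2 + v ^ 2) - 6 * v * m) m := by
  have hsum : HasDerivAt (fun y => y ^ 2 + v ^ 2) (2 * m) m := by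
    simpa using (hasDerivAt_pow 2 m).add_const (v ^ 2)
  have hquad : HasDerivAt (fun y => 3 * v * y ^ 2) (3 * v * (2 * m)) m := by
    simpa using (hasDerivAt_pow 2 m).const_mul (3 * v)
  exact (((hsum.sqrt_pow_three hs).add_const (v ^ 3)).fun_sub hquad).congr_deriv (by ring)

theorem differentiableAt_w₂ (hs : 0 < m ^ 2 + v ^ 2) :
    DifferentiableAt ℝ (fun p : ℝ × ℝ => w₂ p.1 p.2) (v, m) := by
  unfold w₂
  fun_prop (disch := exact (pow_pos hs 3).ne')

theorem w₂_riemannInvariant (hs : 0 < m ^ 2 + v ^ 2) :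
    (-v + √(m ^ 2 + v ^ 2)) * deriv (fun x => w₂ x m) v + m * deriv (fun y => w₂ v y) m
      = 0 := by
  rw [(hasDerivAt_w₂_fst hs).deriv, (hasDerivAt_w₂_snd hs).deriv]
  linear_combination 3 * v * sq_sqrt hs.le

end

/-- `w₂(v,m) = √((m²+v²)³) + v³ − 3vm²` is differentiable on
`{(v,m) : m > 0}` and satisfies `(−v + √(m²+v²)) ∂_v w₂ + m ∂_m w₂ = 0` there;
equivalently `∇w₂ ⊥ r₁ = (−v+√(v²+m²), m)`, so `w₂` is a Riemann invariant of the
system of conservation laws with flux `F(v,m) = (v²/2 − m²/2, −vm)`. -/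
theorem riemann_invariant_w2 :
    let w₂ : ℝ → ℝ → ℝ := fun v m =>
      Real.sqrt ((m ^ 2 + v ^ 2) ^ 3) + v ^ 3 - 3 * v * m ^ 2
    ∀ v m : ℝ, 0 < m →
      DifferentiableAt ℝ (fun p : ℝ × ℝ => w₂ p.1 p.2) (v, m) ∧
      (-v + Real.sqrt (m ^ 2 + v ^ 2)) * deriv (fun x : ℝ => w₂ x m) v +
          m * deriv (fun y : ℝ => w₂ v y) m = 0 ∧
      deriv (fun x : ℝ => w₂ x m) v * (-v + Real.sqrt (v ^ 2 + m ^ 2)) +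
          deriv (fun y : ℝ => w₂ v y) m * m = 0 := by
  intro w v m hm
  have hs : 0 < m ^ 2 + v ^ 2 := by positivity
  refine ⟨differentiableAt_w₂ hs, w₂_riemannInvariant hs, ?_⟩
  rw [add_comm (v ^ 2), mul_comm, mul_comm (deriv _ m)]
  exact w₂_riemannInvariant hs
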